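/- arXiv:1702.01373 — 2 statements merged into one kernel-verified Lean document; each statement's English description precedes it below -/
import Mathlib

section
/- For the function u_0(r) = (sin r/r)^{−(d−1)/2} on (0,π), the first-order parametrix coefficient u_1(r) = (u_0(r)/r) ∫_0^r u_0^{-1}(Δu_0) dr̃, where Δf = f'' + (log√g)' f' with g = c·sin^{2(d−1)}r, equals u_0(r)·(d−1)/(4r²)·[3 − d + (d−1)r² + (d−3)·r·cot r]. -/
/-!
With `p = -(d - 1)/2`, the logarithmic derivative of `u₀ = (sin r / r) ^ p` is `p (cot r - 1/r)`.
Because the coefficient `d - 1 = -2p` of the Laplacian is tied to the exponent, the cross terms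
cancel and, using `cot² = 1/sin² - 1`, `Δu₀ / u₀ = (d-1)/4 · ((d - 1) + (3 - d) (1/sin² r - 1/r²))`.
The last bracket is the nonnegative derivative of `1/s - cot s`, which tends to `0` as `s → 0⁺`;
so it is integrable on `(0, r)` with integral `1/r - cot r`, and the formula is algebra.
-/

open Real Set

/-- The zeroth parametrix coefficient `u₀(r) = (sin r/r)^{−(d−1)/2}` on `(0,π)`. -/
noncomputable def u₀ (d : ℕ) (r : ℝ) : ℝ := (Real.sin r / r) ^ (-(((d : ℝ) - 1) / 2))

/-- The radial Laplacian on `S^d`: `Δf(r) = f''(r) + (d−1)·cot(r)·f'(r)`. -/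
noncomputable def radLap (d : ℕ) (f : ℝ → ℝ) (r : ℝ) : ℝ :=
  deriv (deriv f) r + ((d : ℝ) - 1) * (Real.cos r / Real.sin r) * deriv f r

open Filter Topology intervalIntegral

lemma Real.hasDerivAt_cot {x : ℝ} (hx : sin x ≠ 0) : HasDerivAt cot (-1 / sin x ^ 2) x := by
  rw [funext cot_eq_cos_div_sin]
  refine ((hasDerivAt_cos x).div (hasDerivAt_sin x) hx).congr_deriv ?_
  field_simp
  linear_combination -sin_sq_add_cos_sq x

lemma hasDerivAt_inv_sub_cot {x : ℝ} (h0 : x ≠ 0) (hs : sin x ≠ 0) :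
    HasDerivAt (fun s => s⁻¹ - cot s) (1 / sin x ^ 2 - 1 / x ^ 2) x :=
  ((hasDerivAt_inv h0).sub (hasDerivAt_cot hs)).congr_deriv (by ring)

lemma hasDerivAt_sin_div_rpow (p : ℝ) {x : ℝ} (h0 : x ≠ 0) (hs : sin x ≠ 0) :
    HasDerivAt (fun s => (sin s / s) ^ p) (p * (cot x - x⁻¹) * (sin x / x) ^ p) x := by
  have hq : sin x / x ≠ 0 := div_ne_zero hs h0
  refine (((hasDerivAt_sin x).div (hasDerivAt_id x) h0).rpow_const (p := p)
    (Or.inl hq)).congr_deriv ?_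
  simp only [Pi.div_apply, id]
  rw [rpow_sub_one hq, cot_eq_cos_div_sin]
  field_simp

lemma deriv_deriv_sin_div_rpow (p : ℝ) {x : ℝ} (h0 : x ≠ 0) (hs : sin x ≠ 0) :
    deriv (deriv fun s => (sin s / s) ^ p) x
      = (p * (1 / x ^ 2 - 1 / sin x ^ 2) + (p * (cot x - x⁻¹)) ^ 2) * (sin x / x) ^ p := by
  have hderiv : deriv (fun s => (sin s / s) ^ p) =ᶠ[𝓝 x]
      fun s => p * (cot s - s⁻¹) * (sin s / s) ^ p := by
    filter_upwards [eventually_ne_nhds h0, continuous_sin.continuousAt.eventually_ne hs]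
      with s hs0 hss
    exact (hasDerivAt_sin_div_rpow p hs0 hss).deriv
  rw [hderiv.deriv_eq]
  refine ((((hasDerivAt_cot hs).sub (hasDerivAt_inv h0)).const_mul p).mul
    (hasDerivAt_sin_div_rpow p h0 hs)).deriv.trans ?_
  simp only [Pi.sub_apply]
  ring

lemma radLap_u₀ (d : ℕ) {x : ℝ} (h0 : x ≠ 0) (hs : sin x ≠ 0) :
    radLap d (u₀ d) x
      = ((d : ℝ) - 1) / 4 * (((d : ℝ) - 1) + (3 - d) * (1 / sin x ^ 2 - 1 / x ^ 2)) * u₀ d x := by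
  have hu : u₀ d = fun s => (sin s / s) ^ (-(((d : ℝ) - 1) / 2)) := rfl
  rw [radLap, ← cot_eq_cos_div_sin, hu, deriv_deriv_sin_div_rpow _ h0 hs,
    (hasDerivAt_sin_div_rpow _ h0 hs).deriv, cot_eq_cos_div_sin]
  field_simp
  linear_combination -4 * (((d : ℝ) - 1) * x) ^ 2 * (sin x / x) ^ (-(((d : ℝ) - 1) / 2))
    * sin_sq_add_cos_sq x

lemma inv_u₀_mul_radLap_u₀ (d : ℕ) {x : ℝ} (hx : x ∈ Ioo 0 π) :
    (u₀ d x)⁻¹ * radLap d (u₀ d) x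
      = ((d : ℝ) - 1) / 4 * (((d : ℝ) - 1) + (3 - d) * (1 / sin x ^ 2 - 1 / x ^ 2)) := by
  have hsin := sin_pos_of_pos_of_lt_pi hx.1 hx.2
  have hu : 0 < u₀ d x := rpow_pos_of_pos (div_pos hsin hx.1) _
  rw [radLap_u₀ d hx.1.ne' hsin.ne']
  field_simp

lemma inv_sub_cot_mem_Icc {x : ℝ} (h0 : 0 < x) (h1 : x < 1) : x⁻¹ - cot x ∈ Icc 0 x := by
  have hπ : x < π / 2 := h1.trans (by linarith [pi_gt_three])
  have hs : 0 < sin x := sin_pos_of_pos_of_lt_pi h0 (hπ.trans (by linarith [pi_pos]))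
  have hc : 0 < cos x := cos_pos_of_mem_Ioo ⟨by linarith, hπ⟩
  have htan : x * cos x ≤ sin x := by
    have := le_tan h0.le hπ
    rwa [tan_eq_sin_div_cos, le_div_iff₀ hc] at this
  have hcos : 1 - x ^ 2 / 2 ≤ cos x := one_sub_sq_div_two_le_cos
  have hsin : sin x * (1 - x ^ 2 / 2) ≤ x * (1 - x ^ 2 / 2) :=
    mul_le_mul_of_nonneg_right (sin_le h0.le) (by nlinarith)
  have hK : x⁻¹ - cot x = (sin x - x * cos x) / (x * sin x) := by
    rw [cot_eq_cos_div_sin]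
    field_simp
  rw [hK, mem_Icc, div_le_iff₀ (by positivity)]
  exact ⟨div_nonneg (sub_nonneg.2 htan) (by positivity),
    by nlinarith [mul_le_mul_of_nonneg_left hcos h0.le]⟩

lemma tendsto_inv_sub_cot_nhdsGT_zero :
    Tendsto (fun s => s⁻¹ - cot s) (𝓝[>] 0) (𝓝 0) := by
  have hbounds : ∀ᶠ s in 𝓝[>] (0 : ℝ), s⁻¹ - cot s ∈ Icc 0 s := by
    filter_upwards [Ioo_mem_nhdsGT one_pos] with s hs using inv_sub_cot_mem_Icc hs.1 hs.2
  exact tendsto_of_tendsto_of_tendsto_of_le_of_le' tendsto_const_nhds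
    (tendsto_nhdsWithin_of_tendsto_nhds tendsto_id) (hbounds.mono fun _ h => h.1)
    (hbounds.mono fun _ h => h.2)

lemma continuousOn_inv_sub_cot {r : ℝ} (hr : r < π) :
    ContinuousOn (fun s => s⁻¹ - cot s) (Icc 0 r) := by
  intro x hx
  rcases hx.1.eq_or_lt with rfl | hx0
  · -- at `0` both `0⁻¹` and `cot 0 = cos 0 / sin 0` are junk values `0`
    have h : ContinuousWithinAt (fun s => s⁻¹ - cot s) (Ioi 0) 0 := by
      simpa [ContinuousWithinAt, cot_eq_cos_div_sin] using tendsto_inv_sub_cot_nhdsGT_zero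
    exact (continuousWithinAt_Ioi_iff_Ici.1 h).mono Icc_subset_Ici_self
  · have hs : sin x ≠ 0 := (sin_pos_of_pos_of_lt_pi hx0 (hx.2.trans_lt hr)).ne'
    exact (hasDerivAt_inv_sub_cot hx0.ne' hs).continuousAt.continuousWithinAt

lemma integral_inv_sin_sq_sub_inv_sq {r : ℝ} (h0 : 0 ≤ r) (hr : r < π) :
    IntervalIntegrable (fun s => 1 / sin s ^ 2 - 1 / s ^ 2) MeasureTheory.volume 0 r ∧
      ∫ s in 0..r, (1 / sin s ^ 2 - 1 / s ^ 2) = r⁻¹ - cot r := by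
  have hderiv : ∀ x ∈ Ioo 0 r,
      HasDerivAt (fun s => s⁻¹ - cot s) (1 / sin x ^ 2 - 1 / x ^ 2) x := fun x hx =>
    hasDerivAt_inv_sub_cot hx.1.ne' (sin_pos_of_pos_of_lt_pi hx.1 (hx.2.trans hr)).ne'
  have hnonneg : ∀ x ∈ Ioo 0 r, 0 ≤ 1 / sin x ^ 2 - 1 / x ^ 2 := fun x hx => by
    have hs := sin_pos_of_pos_of_lt_pi hx.1 (hx.2.trans hr)
    have := pow_le_pow_left₀ hs.le (sin_le hx.1.le) 2
    exact sub_nonneg.2 (one_div_le_one_div_of_le (by positivity) this)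
  have hcont := continuousOn_inv_sub_cot hr
  have hint : IntervalIntegrable (fun s => 1 / sin s ^ 2 - 1 / s ^ 2) MeasureTheory.volume 0 r :=
    intervalIntegrable_deriv_of_nonneg (by rwa [uIcc_of_le h0])
      (by simpa [h0] using hderiv) (by simpa [h0] using hnonneg)
  refine ⟨hint, ?_⟩
  rw [integral_eq_sub_of_hasDerivAt_of_le h0 hcont hderiv hint]
  simp [cot_eq_cos_div_sin]

theorem parametrix_u1_formula_general (d : ℕ) (r : ℝ) (hr : r ∈ Ioo (0:ℝ) π) :
    (u₀ d r / r) * ∫ s in (0:ℝ)..r, (u₀ d s)⁻¹ * radLap d (u₀ d) s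
      = u₀ d r * ((d : ℝ) - 1) / (4 * r ^ 2) *
        (3 - (d : ℝ) + ((d : ℝ) - 1) * r ^ 2 +
          ((d : ℝ) - 3) * r * (Real.cos r / Real.sin r)) := by
  obtain ⟨hr0, hrπ⟩ := hr
  obtain ⟨hint, hval⟩ := integral_inv_sin_sq_sub_inv_sq hr0.le hrπ
  have hcongr : ∫ s in 0..r, (u₀ d s)⁻¹ * radLap d (u₀ d) s
      = ∫ s in 0..r, ((d : ℝ) - 1) / 4 * (((d : ℝ) - 1) + (3 - d) * (1 / sin s ^ 2 - 1 / s ^ 2)) :=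
    integral_congr_ae <| .of_forall fun s hs => by
      rw [uIoc_of_le hr0.le] at hs
      exact inv_u₀_mul_radLap_u₀ d ⟨hs.1, hs.2.trans_lt hrπ⟩
  rw [hcongr, integral_const_mul, integral_add intervalIntegrable_const (hint.const_mul _),
    integral_const_mul, hval, integral_const, ← cot_eq_cos_div_sin]
  simp only [sub_zero, smul_eq_mul]
  field_simp
  ring

/-- The first-order parametrix coefficient
`u₁(r) = (u₀(r)/r) ∫₀^r u₀⁻¹ (Δu₀)` equals
`u₀(r)·(d−1)/(4r²)·[3 − d + (d−1)r² + (d−3)·r·cot r]`. -/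
theorem parametrix_u1_formula (d : ℕ) (hd : 1 ≤ d) (r : ℝ) (hr : r ∈ Ioo (0:ℝ) π) :
    (u₀ d r / r) * ∫ s in (0:ℝ)..r, (u₀ d s)⁻¹ * radLap d (u₀ d) s
      = u₀ d r * ((d : ℝ) - 1) / (4 * r ^ 2) *
        (3 - (d : ℝ) + ((d : ℝ) - 1) * r ^ 2 +
          ((d : ℝ) - 3) * r * (Real.cos r / Real.sin r)) :=
  parametrix_u1_formula_general d r hr
end

section
/- For d = 2, the ratio u_1(r)/u_0(r) = (1/(4r²))·[1 + r² − r·cot r] is strictly increasing on (0, π) and tends to +∞ as r → π⁻. -/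
open Real Set Filter Topology

/-!
Writing the ratio as `f r = (1 + r² - r cot r) / (4 r²)`, one computes
`f' r = N r / (4 r³ sin² r)` with `N r = r² + r sin r cos r - 2 sin² r`.
Now `N 0 = N' 0 = 0` and `N'' r = 4 sin r (sin r - r cos r)`, where `sin r - r cos r` vanishes
at `0` and has derivative `r sin r`; so all of these are positive on `(0, π)`.
Near `π` the term `-r cos r / sin r` behaves like `π / sin r → +∞`.
-/

lemma pos_of_hasDerivAt_pos_of_eq_zero {f f' : ℝ → ℝ} (hf : ∀ y, HasDerivAt f (f' y) y)
    (hf0 : f 0 = 0) {x : ℝ} (hx : 0 < x) (hf' : ∀ y ∈ Ioo 0 x, 0 < f' y) : 0 < f x := by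
  have hmono : StrictMonoOn f (Icc 0 x) :=
    strictMonoOn_of_hasDerivWithinAt_pos (convex_Icc 0 x)
      (fun y _ => (hf y).continuousAt.continuousWithinAt)
      (fun y _ => (hf y).hasDerivWithinAt) (by simpa only [interior_Icc] using hf')
  simpa [hf0] using hmono (left_mem_Icc.2 hx.le) (right_mem_Icc.2 hx.le) hx

lemma sin_sub_mul_cos_pos {r : ℝ} (hr0 : 0 < r) (hrπ : r ≤ π) : 0 < sin r - r * cos r := by
  have hderiv : ∀ y, HasDerivAt (fun y => sin y - y * cos y) (y * sin y) y := fun y =>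
    ((hasDerivAt_sin y).fun_sub ((hasDerivAt_id' y).fun_mul (hasDerivAt_cos y))).congr_deriv
      (by ring)
  exact pos_of_hasDerivAt_pos_of_eq_zero hderiv (by simp) hr0
    fun y hy => mul_pos hy.1 (sin_pos_of_pos_of_lt_pi hy.1 (hy.2.trans_le hrπ))

lemma sq_add_mul_sin_mul_cos_sub_two_mul_sin_sq_pos {r : ℝ} (hr0 : 0 < r) (hrπ : r ≤ π) :
    0 < r ^ 2 + r * sin r * cos r - 2 * sin r ^ 2 := by
  have hderiv₂ : ∀ y, HasDerivAt (fun y => 2 * y - 3 * sin y * cos y + y * (cos y ^ 2 - sin y ^ 2))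
      (4 * sin y * (sin y - y * cos y)) y := fun y => by
    refine ((((hasDerivAt_id' y).const_mul 2).fun_sub
      (((hasDerivAt_sin y).const_mul 3).fun_mul (hasDerivAt_cos y))).fun_add
      ((hasDerivAt_id' y).fun_mul (((hasDerivAt_cos y).fun_pow 2).fun_sub
        ((hasDerivAt_sin y).fun_pow 2)))).congr_deriv ?_
    push_cast
    linear_combination (-2 : ℝ) * sin_sq_add_cos_sq y
  have hderiv₁ : ∀ y, HasDerivAt (fun y => y ^ 2 + y * sin y * cos y - 2 * sin y ^ 2)
      (2 * y - 3 * sin y * cos y + y * (cos y ^ 2 - sin y ^ 2)) y := fun y => by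
    refine ((hasDerivAt_pow 2 y).fun_add (((hasDerivAt_id' y).fun_mul (hasDerivAt_sin y)).fun_mul
      (hasDerivAt_cos y))).fun_sub (((hasDerivAt_sin y).fun_pow 2).const_mul 2) |>.congr_deriv ?_
    push_cast
    ring
  refine pos_of_hasDerivAt_pos_of_eq_zero hderiv₁ (by simp) hr0 fun y hy => ?_
  have hyπ : y < π := hy.2.trans_le hrπ
  refine pos_of_hasDerivAt_pos_of_eq_zero hderiv₂ (by simp) hy.1 fun z hz => ?_
  have hzπ : z < π := hz.2.trans hyπ
  exact mul_pos (mul_pos four_pos (sin_pos_of_pos_of_lt_pi hz.1 hzπ))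
    (sin_sub_mul_cos_pos hz.1 hzπ.le)

theorem tendsto_sin_pi : Tendsto sin (𝓝[<] π) (𝓝[>] 0) := by
  apply tendsto_nhdsWithin_of_tendsto_nhds_of_eventually_within
  · convert! continuous_sin.continuousWithinAt.tendsto
    simp
  · filter_upwards [Ioo_mem_nhdsLT pi_pos] with x hx
    exact sin_pos_of_pos_of_lt_pi hx.1 hx.2

noncomputable def parametrixRatio (r : ℝ) : ℝ :=
  1 / (4 * r ^ 2) * (1 + r ^ 2 - r * (cos r / sin r))

lemma hasDerivAt_parametrixRatio {r : ℝ} (hr : r ≠ 0) (hsin : sin r ≠ 0) :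
    HasDerivAt parametrixRatio
      ((r ^ 2 + r * sin r * cos r - 2 * sin r ^ 2) / (4 * r ^ 3 * sin r ^ 2)) r := by
  have hcot := (hasDerivAt_cos r).fun_div (hasDerivAt_sin r) hsin
  refine ((hasDerivAt_const r (1 : ℝ)).fun_div ((hasDerivAt_pow 2 r).const_mul 4)
    (by positivity)).fun_mul (((hasDerivAt_const r (1 : ℝ)).fun_add (hasDerivAt_pow 2 r)).fun_sub
      ((hasDerivAt_id' r).fun_mul hcot)) |>.congr_deriv ?_
  field_simp
  push_cast
  linear_combination r ^ 3 * sin_sq_add_cos_sq r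

theorem strictMonoOn_parametrixRatio : StrictMonoOn parametrixRatio (Ioo 0 π) := by
  have hderiv : ∀ r ∈ Ioo 0 π, HasDerivAt parametrixRatio
      ((r ^ 2 + r * sin r * cos r - 2 * sin r ^ 2) / (4 * r ^ 3 * sin r ^ 2)) r :=
    fun r hr => hasDerivAt_parametrixRatio hr.1.ne' (sin_pos_of_pos_of_lt_pi hr.1 hr.2).ne'
  refine strictMonoOn_of_deriv_pos (convex_Ioo 0 π)
    (fun r hr => (hderiv r hr).continuousAt.continuousWithinAt) fun r hr => ?_
  rw [interior_Ioo] at hr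
  obtain ⟨hr0, hrπ⟩ := hr
  have hsin := sin_pos_of_pos_of_lt_pi hr0 hrπ
  rw [(hderiv r ⟨hr0, hrπ⟩).deriv]
  exact div_pos (sq_add_mul_sin_mul_cos_sub_two_mul_sin_sq_pos hr0 hrπ.le) (by positivity)

theorem tendsto_parametrixRatio_atTop : Tendsto parametrixRatio (𝓝[<] π) atTop := by
  have hscale : Tendsto (fun r : ℝ => 1 / (4 * r ^ 2)) (𝓝[<] π) (𝓝 (1 / (4 * π ^ 2))) :=
    tendsto_nhdsWithin_of_tendsto_nhds
      (continuousAt_const.div (by fun_prop) (by positivity)).tendsto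
  have hconst : Tendsto (fun r : ℝ => 1 + r ^ 2) (𝓝[<] π) (𝓝 (1 + π ^ 2)) :=
    tendsto_nhdsWithin_of_tendsto_nhds ((continuous_const.add (continuous_pow 2)).tendsto π)
  have hcoef : Tendsto (fun r : ℝ => -(r * cos r)) (𝓝[<] π) (𝓝 π) := by
    convert! (continuous_id.mul continuous_cos).neg.continuousWithinAt.tendsto using 2
    simp
  have hbracket : Tendsto (fun r : ℝ => 1 + r ^ 2 + -(r * cos r) * (sin r)⁻¹) (𝓝[<] π) atTop :=
    hconst.add_atTop (hcoef.pos_mul_atTop pi_pos tendsto_sin_pi.inv_tendsto_nhdsGT_zero)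
  refine (hscale.pos_mul_atTop (by positivity) hbracket).congr fun r => ?_
  rw [parametrixRatio]
  ring

/-- For `d = 2`, the ratio `u₁/u₀ = (1/(4r²))·[1 + r² − r·cot r]` is strictly
increasing on `(0, π)` and tends to `+∞` as `r → π⁻`. -/
theorem parametrix_ratio_d2_increasing_and_divergent :
    StrictMonoOn (fun r : ℝ => (1 / (4 * r ^ 2)) *
        (1 + r ^ 2 - r * (Real.cos r / Real.sin r))) (Ioo 0 π) ∧
    Tendsto (fun r : ℝ => (1 / (4 * r ^ 2)) *
        (1 + r ^ 2 - r * (Real.cos r / Real.sin r))) (nhdsWithin π (Iio π)) atTop :=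
  ⟨strictMonoOn_parametrixRatio, tendsto_parametrixRatio_atTop⟩
end
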